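/- Let n ≥ 2 and let f : F_2^n → {0,1} satisfy f̂(0) = 1/2 and every other Fourier coefficient equal to 0 or ±1/4. Then f is the indicator function of a disjoint union of two affine subspaces of F_2^n, each of dimension n−2. -/

import Mathlib

open Finset

/-- The Fourier coefficient `f̂(α) = E_x[f(x)·(-1)^⟨α,x⟩]` of `f : F_2^n → ℝ`. -/
noncomputable def fc {n : ℕ} (f : (Fin n → ZMod 2) → ℝ) (α : Fin n → ZMod 2) : ℝ :=
  (∑ x : Fin n → ZMod 2, f x * (-1 : ℝ) ^ (∑ i, α i * x i : ZMod 2).val) / 2 ^ n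

/-!
Parseval gives `∑ α, f̂(α)² = f̂(0) = 1/2` for a `{0,1}`-valued `f`, so exactly four nonzero
frequencies `α₀, …, α₃` carry the weight, each with `f̂(αᵢ) = ±1/4`. Fourier inversion then writes
`4 f(x) - 2` as a sum of four signs `(-1)^(αᵢ ⬝ᵥ x - tᵢ)`. Such a sum is `±2` only with an odd number
of `-1`s, so `f(x) = 1` exactly when the first two or the last two signs are `+1`, and never both.
Each of these two conditions fixes two independent linear forms, i.e. cuts out an affine subspace
of codimension `2`.
-/

open Matrix

lemma ZMod.eq_zero_or_eq_one_of_two (t : ZMod 2) : t = 0 ∨ t = 1 := by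
  decide +revert

noncomputable def signChar : AddChar (ZMod 2) ℝ :=
  AddChar.zmodChar 2 (by norm_num : (-1 : ℝ) ^ 2 = 1)

lemma signChar_zero : signChar 0 = 1 := AddChar.map_zero_eq_one _

lemma signChar_one : signChar 1 = -1 := by
  simp [signChar, AddChar.zmodChar_apply, ZMod.val_one]

lemma signChar_eq_one_iff {t : ZMod 2} : signChar t = 1 ↔ t = 0 := by
  rcases t.eq_zero_or_eq_one_of_two with rfl | rfl <;> norm_num [signChar_zero, signChar_one]

lemma signChar_sq (t : ZMod 2) : signChar t ^ 2 = 1 := by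
  rw [sq, ← AddChar.map_add_eq_mul, ZModModule.add_self, signChar_zero]

noncomputable def walsh {n : ℕ} (α : Fin n → ZMod 2) : AddChar (Fin n → ZMod 2) ℝ :=
  signChar.compAddMonoidHom (AddMonoidHom.mk' (α ⬝ᵥ ·) (dotProduct_add α))

section Fourier

variable {n : ℕ}

lemma walsh_apply (α x : Fin n → ZMod 2) : walsh α x = signChar (α ⬝ᵥ x) := rfl

lemma walsh_comm (α x : Fin n → ZMod 2) : walsh α x = walsh x α := by
  rw [walsh_apply, walsh_apply, dotProduct_comm]

lemma walsh_zero_apply (x : Fin n → ZMod 2) : walsh 0 x = 1 := by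
  rw [walsh_apply, zero_dotProduct, signChar_zero]

lemma walsh_eq_zero_iff {α : Fin n → ZMod 2} : walsh α = 0 ↔ α = 0 := by
  refine ⟨fun hα => funext fun j => ?_, fun hα => ?_⟩
  · have := DFunLike.congr_fun hα (Pi.single j 1)
    rwa [walsh_apply, dotProduct_single, mul_one, AddChar.zero_apply, signChar_eq_one_iff] at this
  · ext x
    rw [hα, walsh_zero_apply, AddChar.zero_apply]

lemma sum_walsh_apply (z : Fin n → ZMod 2) :
    ∑ α, walsh α z = if z = 0 then (2 : ℝ) ^ n else 0 := by
  simp_rw [walsh_comm _ z, AddChar.sum_eq_ite, walsh_eq_zero_iff, Fintype.card_fun, ZMod.card,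
    Fintype.card_fin, Nat.cast_pow, Nat.cast_ofNat]

lemma fc_eq_sum_walsh (f : (Fin n → ZMod 2) → ℝ) (α : Fin n → ZMod 2) :
    fc f α = (∑ x, f x * walsh α x) / 2 ^ n := rfl

theorem sum_fc_mul_walsh (f : (Fin n → ZMod 2) → ℝ) (x : Fin n → ZMod 2) :
    ∑ α, fc f α * walsh α x = f x := by
  calc ∑ α, fc f α * walsh α x = (∑ y, f y * ∑ α, walsh α (y + x)) / 2 ^ n := by
        simp_rw [fc_eq_sum_walsh, div_mul_eq_mul_div, ← sum_div, sum_mul,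
          mul_sum, AddChar.map_add_eq_mul, mul_assoc]
        rw [sum_comm]
    _ = f x := by
        simp_rw [sum_walsh_apply, add_eq_zero_iff_eq_neg, ZModModule.neg_eq_self, mul_ite,
          mul_zero, sum_ite_eq', if_pos (mem_univ _)]
        field_simp

theorem sum_fc_sq (f : (Fin n → ZMod 2) → ℝ) :
    ∑ α, fc f α ^ 2 = (∑ x, f x ^ 2) / 2 ^ n := by
  calc ∑ α, fc f α ^ 2 = ∑ α, fc f α * ((∑ x, f x * walsh α x) / 2 ^ n) :=
        sum_congr rfl fun α _ => sq _
    _ = (∑ x, f x * ∑ α, fc f α * walsh α x) / 2 ^ n := by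
        simp_rw [mul_div_assoc', ← sum_div, mul_sum]
        rw [sum_comm]
        congr 1
        exact sum_congr rfl fun x _ => sum_congr rfl fun α _ => by ring
    _ = (∑ x, f x ^ 2) / 2 ^ n := by simp_rw [sum_fc_mul_walsh, sq]

lemma sum_fc_sq_of_boolean {f : (Fin n → ZMod 2) → ℝ} (hf : ∀ x, f x = 0 ∨ f x = 1) :
    ∑ α, fc f α ^ 2 = fc f 0 := by
  rw [sum_fc_sq, fc_eq_sum_walsh]
  congr 1
  refine sum_congr rfl fun x _ => ?_
  rcases hf x with hx | hx <;> simp [hx, walsh_zero_apply]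

end Fourier

section Spectrum

variable {n : ℕ} (f : (Fin n → ZMod 2) → ℝ)

noncomputable def spectrumSupport : Finset (Fin n → ZMod 2) :=
  {α ∈ univ.erase 0 | fc f α ≠ 0}

lemma eq_fc_zero_add_sum_spectrumSupport (x : Fin n → ZMod 2) :
    f x = fc f 0 + ∑ α ∈ spectrumSupport f, fc f α * walsh α x := by
  rw [← sum_fc_mul_walsh f x, ← add_sum_erase _ _ (mem_univ 0), walsh_zero_apply, mul_one,
    spectrumSupport, sum_filter_of_ne fun α _ h => left_ne_zero_of_mul h]

variable {f}

lemma mem_spectrumSupport {α : Fin n → ZMod 2} :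
    α ∈ spectrumSupport f ↔ α ≠ 0 ∧ fc f α ≠ 0 := by
  simp [spectrumSupport]

lemma card_spectrumSupport (hf : ∀ x, f x = 0 ∨ f x = 1) (h0 : fc f 0 = 1 / 2)
    (hsign : ∀ α ∈ spectrumSupport f, ∃ t, 4 * fc f α = signChar t) :
    #(spectrumSupport f) = 4 := by
  have hsq : ∀ α ∈ spectrumSupport f, fc f α ^ 2 = 1 / 16 := fun α hα => by
    obtain ⟨t, ht⟩ := hsign α hα
    linear_combination ((4 * fc f α + signChar t) * ht + signChar_sq t) / 16
  have hsum := sum_fc_sq_of_boolean hf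
  rw [← add_sum_erase _ _ (mem_univ 0), h0,
    ← sum_filter_of_ne fun α _ h => pow_ne_zero_iff two_ne_zero |>.mp h, ← spectrumSupport,
    sum_congr rfl hsq, sum_const, nsmul_eq_mul] at hsum
  exact_mod_cast (by linarith : (#(spectrumSupport f) : ℝ) = 4)

lemma exists_four_walsh_expansion (hf : ∀ x, f x = 0 ∨ f x = 1) (h0 : fc f 0 = 1 / 2)
    (hsign : ∀ α ∈ spectrumSupport f, ∃ t, 4 * fc f α = signChar t) :
    ∃ (α : Fin 4 → Fin n → ZMod 2) (t : Fin 4 → ZMod 2), Function.Injective α ∧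
      (∀ i, α i ≠ 0) ∧ ∀ x, ∑ i, signChar (α i ⬝ᵥ x - t i) = 4 * f x - 2 := by
  have hcard := card_spectrumSupport hf h0 hsign
  choose! t ht using hsign
  let e : Fin 4 ≃ spectrumSupport f := (equivFinOfCardEq hcard).symm
  refine ⟨fun i => e i, fun i => t (e i), Subtype.val_injective.comp e.injective,
    fun i => (mem_spectrumSupport.1 (e i).2).1, fun x => ?_⟩
  calc ∑ i : Fin 4, signChar ((e i : Fin n → ZMod 2) ⬝ᵥ x - t (e i))
      = ∑ α ∈ spectrumSupport f, 4 * fc f α * walsh α x := by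
        rw [e.sum_comp fun α => signChar ((α : Fin n → ZMod 2) ⬝ᵥ x - t α),
          sum_coe_sort (spectrumSupport f) fun α => signChar (α ⬝ᵥ x - t α)]
        refine sum_congr rfl fun α hα => ?_
        rw [ZModModule.sub_eq_add, AddChar.map_add_eq_mul, ← ht α hα, walsh_apply, mul_comm]
    _ = 4 * f x - 2 := by
        rw [eq_fc_zero_add_sum_spectrumSupport f x, h0, mul_add, mul_sum]
        simp_rw [mul_assoc]
        ring

end Spectrum

lemma LinearMap.image_add_ker {R M N : Type*} [Ring R] [AddCommGroup M] [AddCommGroup N]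
    [Module R M] [Module R N] (T : M →ₗ[R] N) (a : M) :
    (a + ·) '' (LinearMap.ker T : Set M) = T ⁻¹' {T a} := by
  ext x
  constructor
  · rintro ⟨v, hv, rfl⟩
    simp_all
  · intro hx
    exact ⟨x - a, by simp_all, add_sub_cancel a x⟩

theorem exists_image_add_eq_setOf_mulVec {K : Type*} [Field K] {m n : ℕ}
    (A : Matrix (Fin m) (Fin n) K) (hA : LinearIndependent K A.row) (c : Fin m → K) :
    ∃ (a : Fin n → K) (V : Submodule K (Fin n → K)),
      Module.finrank K V = n - m ∧ (a + ·) '' (V : Set (Fin n → K)) = {x | A *ᵥ x = c} := by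
  have hrank : Module.finrank K (LinearMap.range A.mulVecLin) = m := by
    simpa [Matrix.rank] using hA.rank_matrix
  have hsurj : LinearMap.range A.mulVecLin = ⊤ := Submodule.eq_top_of_finrank_eq (by simp [hrank])
  obtain ⟨a, ha⟩ := LinearMap.range_eq_top.1 hsurj c
  refine ⟨a, LinearMap.ker A.mulVecLin, ?_, ?_⟩
  · have := A.mulVecLin.finrank_range_add_finrank_ker
    simp only [hrank, Module.finrank_fin_fun] at this
    omega
  · rw [LinearMap.image_add_ker, ha]
    rfl

lemma linearIndependent_pair_of_ne_zmod_two {M : Type*} [AddCommGroup M] [Module (ZMod 2) M]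
    {x y : M} (hx : x ≠ 0) (hy : y ≠ 0) (hxy : x ≠ y) : LinearIndependent (ZMod 2) ![x, y] := by
  rw [LinearIndependent.pair_iff]
  intro s t hst
  rcases s.eq_zero_or_eq_one_of_two with rfl | rfl <;>
    rcases t.eq_zero_or_eq_one_of_two with rfl | rfl <;>
    simp_all [add_eq_zero_iff_eq_neg, ZModModule.neg_eq_self]

theorem exists_image_add_eq_setOf_dotProduct {n : ℕ} {α β : Fin n → ZMod 2} (hα : α ≠ 0)
    (hβ : β ≠ 0) (hαβ : α ≠ β) (p q : ZMod 2) :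
    ∃ (a : Fin n → ZMod 2) (V : Submodule (ZMod 2) (Fin n → ZMod 2)),
      Module.finrank (ZMod 2) V = n - 2 ∧
        (a + ·) '' (V : Set (Fin n → ZMod 2)) = {x | α ⬝ᵥ x = p ∧ β ⬝ᵥ x = q} := by
  obtain ⟨a, V, hV, hVeq⟩ := exists_image_add_eq_setOf_mulVec (of ![α, β])
    (linearIndependent_pair_of_ne_zmod_two hα hβ hαβ) ![p, q]
  refine ⟨a, V, hV, hVeq.trans ?_⟩
  ext x
  simp [cons_mulVec, funext_iff, Fin.forall_fin_two]

lemma sum_four_signChar_parity {u : Fin 4 → ZMod 2} {y : ℝ} (hy : y = 0 ∨ y = 1)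
    (hu : ∑ i, signChar (u i) = 4 * y - 2) :
    ¬ ((u 0 = 0 ∧ u 1 = 0) ∧ u 2 = 0 ∧ u 3 = 0) ∧
      (y = 1 ↔ (u 0 = 0 ∧ u 1 = 0) ∨ u 2 = 0 ∧ u 3 = 0) := by
  rw [Fin.sum_univ_four] at hu
  rcases hy with rfl | rfl <;>
    rcases (u 0).eq_zero_or_eq_one_of_two with h0 | h0 <;>
    rcases (u 1).eq_zero_or_eq_one_of_two with h1 | h1 <;>
    rcases (u 2).eq_zero_or_eq_one_of_two with h2 | h2 <;>
    rcases (u 3).eq_zero_or_eq_one_of_two with h3 | h3 <;>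
    revert hu <;> norm_num [h0, h1, h2, h3, signChar_zero, signChar_one]

theorem stmt_12_general {n : ℕ} (f : (Fin n → ZMod 2) → ℝ)
    (hf : ∀ x, f x = 0 ∨ f x = 1)
    (h0 : fc f 0 = 1 / 2 ^ (2 - 1))
    (h : ∀ α : Fin n → ZMod 2, α ≠ 0 →
      fc f α = 0 ∨ fc f α = 1 / 2 ^ 2 ∨ fc f α = -(1 / 2 ^ 2)) :
    ∃ (a b : Fin n → ZMod 2) (V W : Submodule (ZMod 2) (Fin n → ZMod 2)),
      Module.finrank (ZMod 2) V = n - 2 ∧ Module.finrank (ZMod 2) W = n - 2 ∧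
      Disjoint ((a + ·) '' (V : Set (Fin n → ZMod 2)))
        ((b + ·) '' (W : Set (Fin n → ZMod 2))) ∧
      {x | f x = 1} =
        (a + ·) '' (V : Set (Fin n → ZMod 2)) ∪ (b + ·) '' (W : Set (Fin n → ZMod 2)) := by
  have hsign : ∀ α ∈ spectrumSupport f, ∃ t, 4 * fc f α = signChar t := fun α hα => by
    obtain ⟨hα0, hα⟩ := mem_spectrumSupport.1 hα
    rcases h α hα0 with h' | h' | h'
    · exact absurd h' hα
    · exact ⟨0, by rw [h', signChar_zero]; norm_num⟩
    · exact ⟨1, by rw [h', signChar_one]; norm_num⟩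
  obtain ⟨α, t, hinj, hα0, hsum⟩ :=
    exists_four_walsh_expansion hf (by norm_num at h0; exact h0) hsign
  obtain ⟨a, V, hV, hVeq⟩ := exists_image_add_eq_setOf_dotProduct (hα0 0) (hα0 1)
    (hinj.ne (by decide)) (t 0) (t 1)
  obtain ⟨b, W, hW, hWeq⟩ := exists_image_add_eq_setOf_dotProduct (hα0 2) (hα0 3)
    (hinj.ne (by decide)) (t 2) (t 3)
  refine ⟨a, b, V, W, hV, hW, ?_, ?_⟩ <;> rw [hVeq, hWeq]
  · refine Set.disjoint_left.2 fun x hx hx' => (sum_four_signChar_parity (hf x) (hsum x)).1 ?_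
    simpa only [sub_eq_zero] using ⟨hx, hx'⟩
  · ext x
    simpa only [Set.mem_ofPred_eq, Set.mem_union, sub_eq_zero] using
      (sum_four_signChar_parity (hf x) (hsum x)).2

/-- The k = 2 case of the small-k lemma. -/
theorem stmt_12 {n : ℕ} (hn : 2 ≤ n) (f : (Fin n → ZMod 2) → ℝ)
    (hf : ∀ x, f x = 0 ∨ f x = 1)
    (h0 : fc f 0 = 1 / 2 ^ (2 - 1))
    (h : ∀ α : Fin n → ZMod 2, α ≠ 0 →
      fc f α = 0 ∨ fc f α = 1 / 2 ^ 2 ∨ fc f α = -(1 / 2 ^ 2)) :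
    ∃ (a b : Fin n → ZMod 2) (V W : Submodule (ZMod 2) (Fin n → ZMod 2)),
      Module.finrank (ZMod 2) V = n - 2 ∧ Module.finrank (ZMod 2) W = n - 2 ∧
      Disjoint ((a + ·) '' (V : Set (Fin n → ZMod 2)))
        ((b + ·) '' (W : Set (Fin n → ZMod 2))) ∧
      {x | f x = 1} =
        (a + ·) '' (V : Set (Fin n → ZMod 2)) ∪ (b + ·) '' (W : Set (Fin n → ZMod 2)) :=
  stmt_12_general f hf h0 h
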